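/- Let a, b ∈ Δₙ be strictly positive probability vectors, C ∈ ℝ₊^{n×n}, γ > 0, K := exp(−C/γ). Let (f_k, g_k) be the Sinkhorn iterates started from arbitrary f₀, g₀ ∈ ℝⁿ, let P_k := diag(e^{f_k/γ}) K diag(e^{g_k/γ}), and let (f*, g*) be any dual optimal solution (i.e. diag(e^{f*/γ}) K diag(e^{g*/γ}) ∈ Π(a,b)). Then for every k ≥ 2, h(f*, g*) − h(f_k, g_k) ≤ ‖C‖_∞ (‖a − P_k𝟏ₙ‖₁ + ‖b − P_kᵀ𝟏ₙ‖₁). -/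

import Mathlib

/-- The dual entropic OT objective
`h(f,g) = ⟨f,a⟩ + ⟨g,b⟩ − γ Σ_{i,j} exp((f_i + g_j − C_{ij})/γ)`. -/
noncomputable def dualObj {n : ℕ} (a b : Fin n → ℝ) (C : Matrix (Fin n) (Fin n) ℝ)
    (γ : ℝ) (f g : Fin n → ℝ) : ℝ :=
  (∑ i, f i * a i) + (∑ j, g j * b j) -
    γ * ∑ i, ∑ j, Real.exp ((f i + g j - C i j) / γ)

/-- The transport plan `P = diag(e^{f/γ}) K diag(e^{g/γ})` with `K = exp(−C/γ)`. -/
noncomputable def plan {n : ℕ} (C : Matrix (Fin n) (Fin n) ℝ) (γ : ℝ)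
    (f g : Fin n → ℝ) : Matrix (Fin n) (Fin n) ℝ :=
  fun i j => Real.exp (f i / γ) * Real.exp (-C i j / γ) * Real.exp (g j / γ)

/-- `(f k, g k)` is the sequence of Sinkhorn iterates (in dual form): for even `k`,
`f (k+1) = γ log a − γ log (K e^{g k / γ})` and `g (k+1) = g k`; for odd `k`,
`f (k+1) = f k` and `g (k+1) = γ log b − γ log (Kᵀ e^{f k / γ})`,
where `K = exp(−C/γ)`. -/
def SinkhornSeq {n : ℕ} (a b : Fin n → ℝ) (C : Matrix (Fin n) (Fin n) ℝ) (γ : ℝ)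
    (f g : ℕ → Fin n → ℝ) : Prop :=
  ∀ k : ℕ,
    (Even k →
      f (k+1) = (fun i => γ * Real.log (a i) -
        γ * Real.log (∑ j, Real.exp (-C i j / γ) * Real.exp (g k j / γ))) ∧
      g (k+1) = g k) ∧
    (¬ Even k →
      f (k+1) = f k ∧
      g (k+1) = (fun j => γ * Real.log (b j) -
        γ * Real.log (∑ i, Real.exp (-C i j / γ) * Real.exp (f k i / γ))))

/-!
The dual objective `h` is concave, so `h(f*, g*) − h(f, g)` is at most the pairing of
`(f* − f, g* − g)` with the gradient `(a − P𝟏, b − Pᵀ𝟏)` at `(f, g)`. After the first step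
one marginal of `P_k` is exact, so `P_k` has unit mass and both gradient components sum to zero;
such a vector pairs with `v` to at most `½ (max v − min v)` times its `ℓ¹` norm. For `k ≥ 2`,
`f*` and `f_k` are both Sinkhorn updates `γ log a − γ log (K e^{g/γ})` of some `g`, and for `0 ≤ C ≤ ‖C‖_∞`
the term `γ log (K e^{g/γ})_i` varies by at most `‖C‖_∞` in `i`, so `f* − f_k` (and likewise
`g* − g_k`) has oscillation at most `2‖C‖_∞`.
-/

open Finset
open scoped Matrix

section Oscillation

variable {ι : Type*} [Fintype ι]

theorem exists_forall_abs_sub_le_of_forall_sub_le [Nonempty ι] {v : ι → ℝ} {M : ℝ}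
    (hv : ∀ i i', v i - v i' ≤ 2 * M) : ∃ c, ∀ i, |v i - c| ≤ M := by
  obtain ⟨imax, hmax⟩ := Finite.exists_max v
  obtain ⟨imin, hmin⟩ := Finite.exists_min v
  refine ⟨(v imax + v imin) / 2, fun i => abs_le.2 ⟨?_, ?_⟩⟩
  · linarith [hv imax i, hmin i]
  · linarith [hv i imin, hmax i]

theorem sum_mul_le_mul_sum_abs_of_sum_eq_zero {v w : ι → ℝ} {M : ℝ} (hw : ∑ i, w i = 0)
    (hv : ∀ i i', v i - v i' ≤ 2 * M) : ∑ i, v i * w i ≤ M * ∑ i, |w i| := by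
  cases isEmpty_or_nonempty ι
  · simp
  obtain ⟨c, hc⟩ := exists_forall_abs_sub_le_of_forall_sub_le hv
  calc ∑ i, v i * w i = ∑ i, (v i - c) * w i := by
        simp only [sub_mul, sum_sub_distrib, ← mul_sum, hw, mul_zero, sub_zero]
    _ ≤ ∑ i, M * |w i| := sum_le_sum fun i _ =>
        (le_abs_self _).trans ((abs_mul _ _).trans_le
          (mul_le_mul_of_nonneg_right (hc i) (abs_nonneg _)))
    _ = M * ∑ i, |w i| := (mul_sum _ _ _).symm

end Oscillation

theorem sum_sub_sum_col_eq_zero_of_sum_row_eq {ι κ : Type*} [Fintype ι] [Fintype κ]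
    {P : Matrix ι κ ℝ} {a : ι → ℝ} {b : κ → ℝ} (hP : ∀ i, ∑ j, P i j = a i)
    (hab : ∑ i, a i = ∑ j, b j) : ∑ j, (b j - ∑ i, P i j) = 0 := by
  rw [sum_sub_distrib, sum_comm, ← hab, sub_eq_zero]
  exact sum_congr rfl fun i _ => (hP i).symm

theorem abs_le_iSup_iSup_abs {ι κ : Type*} [Finite ι] [Finite κ] (C : Matrix ι κ ℝ)
    (i : ι) (j : κ) : |C i j| ≤ ⨆ i, ⨆ j, |C i j| :=
  le_ciSup_of_le (Set.finite_range _).bddAbove i <|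
    le_ciSup (f := fun j => |C i j|) (Set.finite_range _).bddAbove j

section Sinkhorn

variable {n : ℕ} {C : Matrix (Fin n) (Fin n) ℝ} {γ : ℝ}

/-- The vector `K e^{g/γ}` with `K = exp(−C/γ)`. -/
noncomputable def kernelMulExp (C : Matrix (Fin n) (Fin n) ℝ) (γ : ℝ) (g : Fin n → ℝ)
    (i : Fin n) : ℝ :=
  ∑ j, Real.exp (-C i j / γ) * Real.exp (g j / γ)

/-- The half-step `f = γ log a − γ log (K e^{g/γ})` of Sinkhorn's algorithm; the other
half-step is `sinkhornUpdate b Cᵀ γ f`. -/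
noncomputable def sinkhornUpdate (a : Fin n → ℝ) (C : Matrix (Fin n) (Fin n) ℝ) (γ : ℝ)
    (g : Fin n → ℝ) : Fin n → ℝ :=
  fun i => γ * Real.log (a i) - γ * Real.log (kernelMulExp C γ g i)

theorem plan_apply_eq_exp (f g : Fin n → ℝ) (i j : Fin n) :
    plan C γ f g i j = Real.exp ((f i + g j - C i j) / γ) := by
  simp only [plan, ← Real.exp_add]
  ring_nf

theorem plan_transpose_apply (f g : Fin n → ℝ) (i j : Fin n) :
    plan Cᵀ γ g f j i = plan C γ f g i j := by
  simp only [plan, Matrix.transpose_apply]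
  ring

theorem kernelMulExp_pos (g : Fin n → ℝ) (i : Fin n) : 0 < kernelMulExp C γ g i :=
  sum_pos (fun _ _ => by positivity) ⟨i, mem_univ i⟩

theorem sum_plan_eq_mul_kernelMulExp (f g : Fin n → ℝ) (i : Fin n) :
    ∑ j, plan C γ f g i j = Real.exp (f i / γ) * kernelMulExp C γ g i := by
  simp only [kernelMulExp, mul_sum, plan, mul_assoc]

theorem forall_sum_plan_row_eq_iff {a : Fin n → ℝ} (hγ : γ ≠ 0) (ha : ∀ i, 0 < a i)
    (f g : Fin n → ℝ) : (∀ i, ∑ j, plan C γ f g i j = a i) ↔ f = sinkhornUpdate a C γ g := by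
  simp only [funext_iff, sum_plan_eq_mul_kernelMulExp, sinkhornUpdate]
  refine forall_congr' fun i => ?_
  have hS := kernelMulExp_pos (C := C) (γ := γ) g i
  rw [← eq_div_iff hS.ne', ← Real.exp_log (div_pos (ha i) hS), Real.exp_eq_exp,
    Real.log_div (ha i).ne' hS.ne', div_eq_iff hγ, sub_mul, mul_comm (Real.log (a i)),
    mul_comm (Real.log _)]

theorem forall_sum_plan_col_eq_iff {b : Fin n → ℝ} (hγ : γ ≠ 0) (hb : ∀ j, 0 < b j)
    (f g : Fin n → ℝ) : (∀ j, ∑ i, plan C γ f g i j = b j) ↔ g = sinkhornUpdate b Cᵀ γ f := by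
  simp only [← plan_transpose_apply (C := C) f g]
  exact forall_sum_plan_row_eq_iff hγ hb g f

theorem mul_log_kernelMulExp_sub_le (hγ : 0 < γ) {M : ℝ} (hC : ∀ i j, 0 ≤ C i j)
    (hM : ∀ i j, C i j ≤ M) (w : Fin n → ℝ) (i i' : Fin n) :
    γ * Real.log (kernelMulExp C γ w i) - γ * Real.log (kernelMulExp C γ w i') ≤ M := by
  have hle : kernelMulExp C γ w i ≤ Real.exp (M / γ) * kernelMulExp C γ w i' := by
    simp only [kernelMulExp, mul_sum, ← Real.exp_add]
    refine sum_le_sum fun j _ => Real.exp_le_exp.2 ?_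
    have : -C i j / γ ≤ M / γ + -C i' j / γ := by
      rw [← add_div]
      exact div_le_div_of_nonneg_right (by linarith [hC i j, hM i' j]) hγ.le
    linarith
  have hlog := Real.log_le_log (kernelMulExp_pos w i) hle
  rw [Real.log_mul (Real.exp_ne_zero _) (kernelMulExp_pos w i').ne', Real.log_exp] at hlog
  have hγlog := mul_le_mul_of_nonneg_left hlog hγ.le
  rw [mul_add, mul_div_cancel₀ _ hγ.ne'] at hγlog
  linarith

theorem sinkhornUpdate_sub_sinkhornUpdate_sub_le (hγ : 0 < γ) {M : ℝ} (hC : ∀ i j, 0 ≤ C i j)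
    (hM : ∀ i j, C i j ≤ M) (a g g' : Fin n → ℝ) (i i' : Fin n) :
    (sinkhornUpdate a C γ g i - sinkhornUpdate a C γ g' i) -
      (sinkhornUpdate a C γ g i' - sinkhornUpdate a C γ g' i') ≤ 2 * M := by
  simp only [sinkhornUpdate]
  linarith [mul_log_kernelMulExp_sub_le hγ hC hM g' i i',
    mul_log_kernelMulExp_sub_le hγ hC hM g i' i]

end Sinkhorn

theorem exp_mul_sub_le_exp_sub_exp (x y : ℝ) :
    Real.exp x * (y - x) ≤ Real.exp y - Real.exp x := by
  have h := mul_le_mul_of_nonneg_left (Real.add_one_le_exp (y - x)) (Real.exp_pos x).le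
  rw [← Real.exp_add, add_sub_cancel] at h
  linarith

/-- Concavity of `h`: its gradient at `(f, g)` is `(a − P𝟏, b − Pᵀ𝟏)`. -/
theorem dualObj_sub_dualObj_le {n : ℕ} (a b : Fin n → ℝ) (C : Matrix (Fin n) (Fin n) ℝ) {γ : ℝ}
    (hγ : 0 < γ) (f g f' g' : Fin n → ℝ) :
    dualObj a b C γ f' g' - dualObj a b C γ f g ≤
      (∑ i, (f' i - f i) * (a i - ∑ j, plan C γ f g i j)) +
        ∑ j, (g' j - g j) * (b j - ∑ i, plan C γ f g i j) := by
  have hpoint : ∀ i j, plan C γ f g i j * ((f' i - f i) + (g' j - g j)) ≤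
      γ * Real.exp ((f' i + g' j - C i j) / γ) - γ * Real.exp ((f i + g j - C i j) / γ) := by
    intro i j
    have h := mul_le_mul_of_nonneg_left (exp_mul_sub_le_exp_sub_exp
      ((f i + g j - C i j) / γ) ((f' i + g' j - C i j) / γ)) hγ.le
    have hdiff : γ * ((f' i + g' j - C i j) / γ - (f i + g j - C i j) / γ) =
        (f' i - f i) + (g' j - g j) := by
      field_simp
      ring
    rw [plan_apply_eq_exp, ← hdiff]
    linarith
  have hsum := sum_le_sum fun i (_ : i ∈ univ) => sum_le_sum fun j (_ : j ∈ univ) => hpoint i j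
  simp only [mul_add, sum_add_distrib] at hsum
  rw [sum_comm (f := fun i j => plan C γ f g i j * (g' j - g j))] at hsum
  simp only [dualObj, mul_sub, sub_mul, sum_sub_distrib, mul_sum, mul_comm (plan C γ f g _ _)]
    at hsum ⊢
  linarith

namespace SinkhornSeq

variable {n : ℕ} {a b : Fin n → ℝ} {C : Matrix (Fin n) (Fin n) ℝ} {γ : ℝ}
  {f g : ℕ → Fin n → ℝ}

theorem exists_eq_sinkhornUpdate_left (h : SinkhornSeq a b C γ f g) {k : ℕ} (hk : 1 ≤ k) :
    ∃ m, f k = sinkhornUpdate a C γ (g m) := by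
  induction k, hk using Nat.le_induction with
  | base => exact ⟨0, ((h 0).1 Even.zero).1⟩
  | succ k _ ih =>
    by_cases hk : Even k
    · exact ⟨k, ((h k).1 hk).1⟩
    · rw [((h k).2 hk).1]
      exact ih

theorem exists_eq_sinkhornUpdate_right (h : SinkhornSeq a b C γ f g) {k : ℕ} (hk : 2 ≤ k) :
    ∃ m, g k = sinkhornUpdate b Cᵀ γ (f m) := by
  induction k, hk using Nat.le_induction with
  | base => exact ⟨1, ((h 1).2 Nat.not_even_one).2⟩
  | succ k _ ih =>
    by_cases hk : Even k
    · rw [((h k).1 hk).2]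
      exact ih
    · exact ⟨k, ((h k).2 hk).2⟩

/-- After the first step one marginal of the plan is exact, so the plan has unit mass. -/
theorem sum_marginal_errors_eq_zero (h : SinkhornSeq a b C γ f g) (hγ : γ ≠ 0)
    (ha : ∀ i, 0 < a i) (hb : ∀ j, 0 < b j) (hab : ∑ i, a i = ∑ j, b j) {k : ℕ} (hk : 1 ≤ k) :
    ∑ i, (a i - ∑ j, plan C γ (f k) (g k) i j) = 0 ∧
      ∑ j, (b j - ∑ i, plan C γ (f k) (g k) i j) = 0 := by
  obtain ⟨l, rfl⟩ := Nat.exists_eq_add_of_le' hk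
  by_cases hl : Even l
  · have hrow := (forall_sum_plan_row_eq_iff hγ ha _ _).2 (((h l).1 hl).2 ▸ ((h l).1 hl).1)
    refine ⟨by simp [hrow], sum_sub_sum_col_eq_zero_of_sum_row_eq hrow hab⟩
  · have hcol := (forall_sum_plan_col_eq_iff hγ hb _ _).2 (((h l).2 hl).1 ▸ ((h l).2 hl).2)
    refine ⟨sum_sub_sum_col_eq_zero_of_sum_row_eq (P := (plan C γ _ _)ᵀ) hcol hab.symm,
      by simp [hcol]⟩

end SinkhornSeq

/-- **Dual gap bound for Sinkhorn** (Lemma 5 of the paper): for `k ≥ 2` and any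
dual optimal solution `(f*, g*)`,
`h(f*,g*) − h(f_k,g_k) ≤ ‖C‖_∞ (‖a − P_k𝟏‖₁ + ‖b − P_kᵀ𝟏‖₁)`. -/
theorem sinkhorn_dual_gap_bound {n : ℕ} (a b : Fin n → ℝ)
    (C : Matrix (Fin n) (Fin n) ℝ) (γ : ℝ) (hγ : 0 < γ)
    (ha0 : ∀ i, 0 < a i) (hb0 : ∀ j, 0 < b j)
    (ha1 : ∑ i, a i = 1) (hb1 : ∑ j, b j = 1)
    (hC : ∀ i j, 0 ≤ C i j)
    (f g : ℕ → Fin n → ℝ) (hiter : SinkhornSeq a b C γ f g)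
    (fs gs : Fin n → ℝ)
    (hfs : ∀ i, ∑ j, plan C γ fs gs i j = a i)
    (hgs : ∀ j, ∑ i, plan C γ fs gs i j = b j)
    (k : ℕ) (hk : 2 ≤ k) :
    dualObj a b C γ fs gs - dualObj a b C γ (f k) (g k) ≤
      (⨆ i, ⨆ j, |C i j|) *
        ((∑ i, |a i - ∑ j, plan C γ (f k) (g k) i j|) +
          (∑ j, |b j - ∑ i, plan C γ (f k) (g k) i j|)) := by
  set M := ⨆ i, ⨆ j, |C i j|
  have hM : ∀ i j, C i j ≤ M := fun i j => (le_abs_self _).trans (abs_le_iSup_iSup_abs C i j)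
  have hCt : ∀ i j, 0 ≤ Cᵀ i j := fun i j => hC j i
  have hMt : ∀ i j, Cᵀ i j ≤ M := fun i j => hM j i
  have hfs' := (forall_sum_plan_row_eq_iff hγ.ne' ha0 fs gs).1 hfs
  have hgs' := (forall_sum_plan_col_eq_iff hγ.ne' hb0 fs gs).1 hgs
  obtain ⟨m, hfk⟩ := hiter.exists_eq_sinkhornUpdate_left (by omega : 1 ≤ k)
  obtain ⟨m', hgk⟩ := hiter.exists_eq_sinkhornUpdate_right hk
  obtain ⟨hrow, hcol⟩ :=
    hiter.sum_marginal_errors_eq_zero hγ.ne' ha0 hb0 (ha1.trans hb1.symm) (by omega : 1 ≤ k)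
  have hoscf : ∀ i i', (fs i - f k i) - (fs i' - f k i') ≤ 2 * M := by
    rw [hfs', hfk]
    exact sinkhornUpdate_sub_sinkhornUpdate_sub_le hγ hC hM a gs (g m)
  have hoscg : ∀ j j', (gs j - g k j) - (gs j' - g k j') ≤ 2 * M := by
    rw [hgs', hgk]
    exact sinkhornUpdate_sub_sinkhornUpdate_sub_le hγ hCt hMt b fs (f m')
  calc _ ≤ _ := dualObj_sub_dualObj_le a b C hγ (f k) (g k) fs gs
    _ ≤ _ := add_le_add (sum_mul_le_mul_sum_abs_of_sum_eq_zero hrow hoscf)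
        (sum_mul_le_mul_sum_abs_of_sum_eq_zero hcol hoscg)
    _ = _ := (mul_add _ _ _).symm
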